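/- Let M be a matroid on a finite ground set E satisfying the strong White condition, and let b be a basis of M such that the collection B(M) \ {b} is the collection of bases of a matroid M_b on E. If M_b satisfies the weak White condition, then M_b satisfies the strong White condition. -/

import Mathlib

open Matroid

variable {α : Type*}

/-- `T` is obtained from `S` by a single symmetric exchange step in the matroid `M`:
`S = S₀ + {B₁, B₂}` and `T = S₀ + {B₁', B₂'}` where `S₀` is a multiset of bases,
`B₁, B₂` are bases, and `B₁' = (B₁ \ {e}) ∪ {f}`, `B₂' = (B₂ \ {f}) ∪ {e}` are bases
for some `e ∈ B₁ \ B₂` and `f ∈ B₂ \ B₁`. -/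
def SymExchStep [DecidableEq α] (M : Matroid α) (S T : Multiset (Finset α)) : Prop :=
  ∃ (S₀ : Multiset (Finset α)) (B₁ B₂ : Finset α) (e f : α),
    (∀ B ∈ S₀, M.IsBase (B : Set α)) ∧
    M.IsBase (B₁ : Set α) ∧ M.IsBase (B₂ : Set α) ∧
    e ∈ B₁ \ B₂ ∧ f ∈ B₂ \ B₁ ∧
    M.IsBase ((insert f (B₁.erase e) : Finset α) : Set α) ∧
    M.IsBase ((insert e (B₂.erase f) : Finset α) : Set α) ∧
    S = B₁ ::ₘ B₂ ::ₘ S₀ ∧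
    T = insert f (B₁.erase e) ::ₘ insert e (B₂.erase f) ::ₘ S₀

/-- `M` satisfies the strong White condition: any two multisets of bases of `M`
with equal element multiset sums are connected by a finite sequence of
symmetric exchange steps. -/
def StrongWhite [DecidableEq α] (M : Matroid α) : Prop :=
  ∀ S T : Multiset (Finset α),
    (∀ B ∈ S, M.IsBase (B : Set α)) → (∀ B ∈ T, M.IsBase (B : Set α)) →
    (S.map Finset.val).sum = (T.map Finset.val).sum →
    Relation.ReflTransGen (SymExchStep M) S T

/-- `T` is obtained from `S` by a quadratic move in `M`: `S = S₀ + {B₁, B₂}` and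
`T = S₀ + {B₁', B₂'}` for bases `B₁, B₂, B₁', B₂'` of `M` with
`B₁ + B₂ = B₁' + B₂'` as multisets of elements. -/
def QuadMove [DecidableEq α] (M : Matroid α) (S T : Multiset (Finset α)) : Prop :=
  ∃ (S₀ : Multiset (Finset α)) (B₁ B₂ B₁' B₂' : Finset α),
    (∀ B ∈ S₀, M.IsBase (B : Set α)) ∧
    M.IsBase (B₁ : Set α) ∧ M.IsBase (B₂ : Set α) ∧
    M.IsBase (B₁' : Set α) ∧ M.IsBase (B₂' : Set α) ∧
    B₁.val + B₂.val = B₁'.val + B₂'.val ∧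
    S = B₁ ::ₘ B₂ ::ₘ S₀ ∧ T = B₁' ::ₘ B₂' ::ₘ S₀

/-- `M` satisfies the weak White condition: any two multisets of bases of `M`
with equal element multiset sums are connected by a finite sequence of quadratic moves. -/
def WeakWhite [DecidableEq α] (M : Matroid α) : Prop :=
  ∀ S T : Multiset (Finset α),
    (∀ B ∈ S, M.IsBase (B : Set α)) → (∀ B ∈ T, M.IsBase (B : Set α)) →
    (S.map Finset.val).sum = (T.map Finset.val).sum →
    Relation.ReflTransGen (QuadMove M) S T

/-!
Each quadratic move of `Mb` replaces a pair of bases by another pair with the same element sum.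
By the strong White condition for `M` the two pairs are joined by symmetric exchanges in `M`, and
it remains to reroute this path around the pairs containing `b`. Such a pair is determined by the
sum, say `{b, D}`; the path enters it from `{b - u + v, D - v + u}` and leaves it towards
`{b - u' + v', D - v' + u'}`. Since `B(M) \ {b}` is the family of bases of a matroid, `b - x + y` is
a base for all `x ∈ b \ D` and `y ∈ D \ b`. A rank count then shows that the exchange edges
`(x, y)`, those with `D - y + x` a base, are connected under moves changing one coordinate, and
each such move is a symmetric exchange step in `Mb`.
-/

namespace Matroid

open Set

variable {M : Matroid α} {B Z : Set α} {x : α}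

theorem IsBase.exists_isBase_insert_sdiff_of_notMem_closure (hB : M.IsBase B)
    (hx : x ∈ M.E \ B) (hxZ : x ∉ M.closure Z) : ∃ y ∈ B \ Z, M.IsBase (insert x (B \ {y})) := by
  by_contra! h
  have hC := hB.fundCircuit_isCircuit hx.1 hx.2
  refine hxZ (M.closure_subset_closure ?_ (hC.mem_closure_sdiff_singleton_of_mem
    (M.mem_fundCircuit x B)))
  rintro y ⟨hyC, hyx : y ≠ x⟩
  have hyB : y ∈ B := by simpa [hyx] using M.fundCircuit_subset_insert x B hyC
  by_contra hyZ
  have hind := (hB.indep.mem_fundCircuit_iff (by rw [hB.closure_eq]; exact hx.1) hx.2).1 hyC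
  rw [← insert_sdiff_singleton_comm hyx.symm] at hind
  exact h y ⟨hyB, hyZ⟩ (hB.exchange_isBase_of_indep hx.2 hind)

theorem Indep.encard_le_of_subset_closure {J : Set α} (hJ : M.Indep J) (hJZ : J ⊆ M.closure Z) :
    J.encard ≤ Z.encard :=
  (hJ.encard_le_eRk_of_subset hJZ).trans ((M.eRk_closure_eq Z).trans_le (M.eRk_le_encard Z))

theorem IsBase.card_sdiff_comm [DecidableEq α] {b D : Finset α} (hb : M.IsBase (b : Set α))
    (hD : M.IsBase (D : Set α)) : (b \ D).card = (D \ b).card := by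
  have := hb.encard_sdiff_comm hD
  rwa [← Finset.coe_sdiff, ← Finset.coe_sdiff, encard_coe_eq_coe_finsetCard,
    encard_coe_eq_coe_finsetCard, Nat.cast_inj] at this

end Matroid

def IsBaseDeletion (M Mb : Matroid α) (b : Set α) : Prop :=
  ∀ B, Mb.IsBase B ↔ M.IsBase B ∧ B ≠ b

namespace IsBaseDeletion

open Set

variable {M Mb : Matroid α} {b D : Set α} {u v : α}

theorem isBase_of_mem_of_notMem (h : IsBaseDeletion M Mb b) {B : Set α} (hB : M.IsBase B)
    {e : α} (heB : e ∈ B) (heb : e ∉ b) : Mb.IsBase B :=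
  (h B).2 ⟨hB, fun hBb ↦ heb (hBb ▸ heB)⟩

/-- The bases `b - u + z` (with `z ∈ D \ b`) and `b - w + v` both lie in `Mb`; exchanging `z` out of
the first towards the second gives a base `b - u + y` of `Mb` with `y ∈ {u, v}`, where `y = u`
would make `b` a base of `Mb`. -/
theorem isBase_insert_sdiff (h : IsBaseDeletion M Mb b) (hb : M.IsBase b) (hD : M.IsBase D)
    (hu : u ∈ b \ D) (hv : v ∈ D \ b) : M.IsBase (insert v (b \ {u})) := by
  obtain ⟨z, hz, hX⟩ := hb.exchange hD hu
  obtain rfl | hzv := eq_or_ne z v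
  · exact hX
  obtain ⟨w, -, hY⟩ := hb.exists_isBase_insert_sdiff_of_notMem_closure
    ⟨hD.subset_ground hv.1, hv.2⟩ (hD.indep.isNonloop_of_mem hv.1).not_isLoop
  obtain ⟨y, hy, hXY⟩ := (h.isBase_of_mem_of_notMem hX (mem_insert z _) hz.2).exchange
    (h.isBase_of_mem_of_notMem hY (mem_insert v _) hv.2) ⟨mem_insert z _, by simp [hzv, hz.2]⟩
  rw [show insert z (b \ {u}) \ {z} = b \ {u} by simp [hz.2]] at hXY
  obtain rfl | rfl : y = v ∨ y = u := by
    simp only [mem_sdiff, mem_insert_iff, mem_singleton_iff, not_or, not_and, not_not] at hy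
    tauto
  · exact ((h _).1 hXY).1
  · exact absurd (insert_sdiff_self_of_mem hu.1) ((h _).1 hXY).2

end IsBaseDeletion

theorem Multiset.exists_eq_cons_cons_zero_of_mem {β : Type*} {X : Multiset β} {a : β}
    (ha : a ∈ X) (hX : Multiset.card X = 2) : ∃ c, X = a ::ₘ c ::ₘ 0 := by
  obtain ⟨X', rfl⟩ := Multiset.exists_cons_of_mem ha
  obtain ⟨c, rfl⟩ := Multiset.card_eq_one.1 (by simpa using hX : Multiset.card X' = 1)
  exact ⟨c, rfl⟩

theorem eq_of_mem_of_sum_val_eq {b : Finset α} {X Y : Multiset (Finset α)} (hX : b ∈ X)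
    (hY : b ∈ Y) (hXc : Multiset.card X = 2) (hYc : Multiset.card Y = 2)
    (hsum : (X.map Finset.val).sum = (Y.map Finset.val).sum) : X = Y := by
  obtain ⟨c, rfl⟩ := Multiset.exists_eq_cons_cons_zero_of_mem hX hXc
  obtain ⟨d, rfl⟩ := Multiset.exists_eq_cons_cons_zero_of_mem hY hYc
  simp only [Multiset.map_cons, Multiset.sum_cons, Multiset.map_zero, Multiset.sum_zero,
    add_zero, add_right_inj, Finset.val_inj] at hsum
  rw [hsum]

section DecidableEq

variable [DecidableEq α]

theorem Finset.insert_erase_insert_erase {s : Finset α} {a c : α} (ha : a ∈ s) (hc : c ∉ s) :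
    insert a ((insert c (s.erase a)).erase c) = s := by
  rw [erase_insert fun h ↦ hc (mem_of_mem_erase h), insert_erase ha]

theorem Finset.val_add_val_exchange {A B : Finset α} {e f : α} (he : e ∈ A \ B) (hf : f ∈ B \ A) :
    (insert f (A.erase e)).val + (insert e (B.erase f)).val = A.val + B.val := by
  rw [mem_sdiff] at he hf
  rw [insert_val_of_notMem fun h ↦ hf.2 (mem_of_mem_erase h), erase_val,
    insert_val_of_notMem fun h ↦ he.2 (mem_of_mem_erase h), erase_val]
  conv_rhs => rw [← Multiset.cons_erase (show e ∈ A.val from he.1),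
    ← Multiset.cons_erase (show f ∈ B.val from hf.1)]
  simp only [Multiset.cons_add, Multiset.add_cons, Multiset.cons_swap]

namespace SymExchStep

variable {M N : Matroid α} {S T : Multiset (Finset α)}

theorem symm (h : SymExchStep N S T) : SymExchStep N T S := by
  obtain ⟨S₀, B₁, B₂, e, f, hS₀, hB₁, hB₂, he, hf, hB₁', hB₂', rfl, rfl⟩ := h
  rw [Finset.mem_sdiff] at he hf
  have h₁ := Finset.insert_erase_insert_erase he.1 hf.2
  have h₂ := Finset.insert_erase_insert_erase hf.1 he.2
  refine ⟨S₀, _, _, f, e, hS₀, hB₁', hB₂', ?_, ?_, by rwa [h₁], by rwa [h₂], rfl, by rw [h₁, h₂]⟩ <;>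
    simp only [Finset.mem_sdiff, Finset.mem_insert, Finset.mem_erase] <;> grind

theorem isBase_of_mem_left (h : SymExchStep N S T) {B : Finset α} (hB : B ∈ S) :
    N.IsBase (B : Set α) := by
  obtain ⟨S₀, B₁, B₂, e, f, hS₀, hB₁, hB₂, -, -, -, -, rfl, -⟩ := h
  simp only [Multiset.mem_cons] at hB
  obtain rfl | rfl | hB := hB
  exacts [hB₁, hB₂, hS₀ B hB]

theorem card_eq (h : SymExchStep N S T) : Multiset.card T = Multiset.card S := by
  obtain ⟨S₀, B₁, B₂, e, f, -, -, -, -, -, -, -, rfl, rfl⟩ := h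
  simp

theorem sum_eq (h : SymExchStep N S T) : (S.map Finset.val).sum = (T.map Finset.val).sum := by
  obtain ⟨S₀, B₁, B₂, e, f, -, -, -, he, hf, -, -, rfl, rfl⟩ := h
  simp only [Multiset.map_cons, Multiset.sum_cons, ← add_assoc, Finset.val_add_val_exchange he hf]

theorem of_isBase (h : SymExchStep M S T) (hS : ∀ B ∈ S, N.IsBase (B : Set α))
    (hT : ∀ B ∈ T, N.IsBase (B : Set α)) : SymExchStep N S T := by
  obtain ⟨S₀, B₁, B₂, e, f, -, -, -, he, hf, -, -, rfl, rfl⟩ := h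
  exact ⟨S₀, B₁, B₂, e, f, fun B hB ↦ hS B (by simp [hB]), hS _ (by simp), hS _ (by simp), he, hf,
    hT _ (by simp), hT _ (by simp), rfl, rfl⟩

theorem add_right (h : SymExchStep N S T) {S₀ : Multiset (Finset α)}
    (hS₀ : ∀ B ∈ S₀, N.IsBase (B : Set α)) : SymExchStep N (S + S₀) (T + S₀) := by
  obtain ⟨S₁, B₁, B₂, e, f, hS₁, hB₁, hB₂, he, hf, hB₁', hB₂', rfl, rfl⟩ := h
  refine ⟨S₁ + S₀, B₁, B₂, e, f, ?_, hB₁, hB₂, he, hf, hB₁', hB₂', by simp, by simp⟩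
  simpa [or_imp, forall_and] using ⟨hS₁, hS₀⟩

end SymExchStep

variable {M Mb N : Matroid α} {b D : Finset α} {u v u' v' x y : α}

theorem IsBaseDeletion.isBase_insert_erase (h : IsBaseDeletion M Mb b) (hb : M.IsBase (b : Set α))
    (hD : M.IsBase (D : Set α)) (hu : u ∈ b \ D) (hv : v ∈ D \ b) :
    M.IsBase (insert v (b.erase u) : Finset α) := by
  simpa using h.isBase_insert_sdiff hb hD (by simpa using hu) (by simpa using hv)

def IsExchangeEdge (M : Matroid α) (b D : Finset α) (x y : α) : Prop :=
  x ∈ b \ D ∧ y ∈ D \ b ∧ M.IsBase (insert x (D.erase y) : Finset α)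

/-- Rook moves between exchange edges, seen as cells of `(b \ D) × (D \ b)`. -/
def ExchangeMove (M : Matroid α) (b D : Finset α) (p q : α × α) : Prop :=
  IsExchangeEdge M b D q.1 q.2 ∧ (p.1 = q.1 ∨ p.2 = q.2)

open Finset in
/-- The base `b - u + v` lies in the closure of `(b ∩ D) ∪ ((D \ b) \ Q) ∪ (P - u)`: an element of
`b \ D` outside `P` has all its exchange edges outside `Q`, so it is spanned by the rest of `D`. -/
theorem card_lt_card_of_not_isExchangeEdge (hb : M.IsBase (b : Set α))
    (hD : M.IsBase (D : Set α)) {P Q : Finset α} (hQ : Q ⊆ D \ b)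
    (hPQ : ∀ x ∈ b \ D, x ∉ P → ∀ y ∈ Q, ¬ IsExchangeEdge M b D x y)
    (hu : u ∈ P) (hv : v ∈ D \ b) (hvQ : v ∉ Q)
    (huv : M.IsBase (insert v (b.erase u) : Finset α)) : Q.card < P.card := by
  set Z₀ := b ∩ D ∪ ((D \ b) \ Q)
  have hcl : ((insert v (b.erase u) : Finset α) : Set α) ⊆ M.closure ↑(Z₀ ∪ P.erase u) := by
    intro t ht
    have htE : t ∈ M.E := huv.subset_ground ht
    have : t ∈ Z₀ ∪ P.erase u ∨ (t ∈ b \ D ∧ t ∉ P) := by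
      simp only [coe_insert, coe_erase, Set.mem_insert_iff, Set.mem_sdiff, mem_coe,
        Set.mem_singleton_iff] at ht
      grind
    obtain htZ | ⟨htbD, htP⟩ := this
    · exact M.mem_closure_of_mem' htZ htE
    by_contra htcl
    obtain ⟨y, hy, hyb⟩ := hD.exists_isBase_insert_sdiff_of_notMem_closure (Z := Z₀)
      ⟨htE, by simpa using (mem_sdiff.1 htbD).2⟩
      fun h ↦ htcl (M.closure_subset_closure (by simp) h)
    have hyQ : y ∈ D \ b ∧ y ∈ Q := by
      simp only [Z₀, Set.mem_sdiff, mem_coe, coe_union, coe_inter, coe_sdiff, Set.mem_union,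
        Set.mem_inter_iff] at hy
      grind
    exact hPQ t htbD htP y hyQ.2 ⟨htbD, hyQ.1, by simpa using hyb⟩
  have hle := huv.indep.encard_le_of_subset_closure hcl
  rw [Set.encard_coe_eq_coe_finsetCard, Set.encard_coe_eq_coe_finsetCard, Nat.cast_le] at hle
  have hvb : v ∉ b.erase u := fun h ↦ (mem_sdiff.1 hv).2 (mem_of_mem_erase h)
  have hcard : #b ≤ #(b ∩ D) + (#(D \ b) - #Q) + (#P - 1) := calc
    #b ≤ #(insert v (b.erase u)) := by
      rw [card_insert_of_notMem hvb]; exact Nat.le_succ_of_pred_le pred_card_le_card_erase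
    _ ≤ #(Z₀ ∪ P.erase u) := hle
    _ ≤ #(b ∩ D) + #((D \ b) \ Q) + #(P.erase u) := by
      grw [card_union_le, card_union_le]
    _ = #(b ∩ D) + (#(D \ b) - #Q) + (#P - 1) := by
      rw [card_sdiff_of_subset hQ, card_erase_of_mem hu]
  have := card_sdiff_add_card_inter b D
  have := Finset.card_le_card hQ
  have := card_pos.2 ⟨u, hu⟩
  have := hb.card_sdiff_comm hD
  omega

open Finset in
/-- Let `U × V` be the rows and columns met by the component of `(u, v)`. If `(u', v')` is not in
it, the counting lemma applied to `(U, V)` and to their complements gives `#V < #U` and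
`#(D \ b \ V) < #(b \ D \ U)`, contradicting `#(b \ D) = #(D \ b)`. -/
theorem IsBaseDeletion.reflTransGen_exchangeMove (h : IsBaseDeletion M Mb b)
    (hb : M.IsBase (b : Set α)) (hD : M.IsBase (D : Set α)) (he : IsExchangeEdge M b D u v)
    (he' : IsExchangeEdge M b D u' v') :
    Relation.ReflTransGen (ExchangeMove M b D) (u, v) (u', v') := by
  classical
  by_contra hnr
  set R := Relation.ReflTransGen (ExchangeMove M b D) (u, v)
  set U := (b \ D).filter fun x ↦ ∃ y, R (x, y)
  set V := (D \ b).filter fun y ↦ ∃ x, R (x, y)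
  have hU : U ⊆ b \ D := filter_subset _ _
  have hV : V ⊆ D \ b := filter_subset _ _
  have hUV : ∀ x y, IsExchangeEdge M b D x y → (x ∈ U ↔ y ∈ V) := by
    intro x y hxy
    simp only [U, V, mem_filter, hxy.1, hxy.2.1, true_and]
    exact ⟨fun ⟨_, hr⟩ ↦ ⟨x, hr.tail ⟨hxy, .inl rfl⟩⟩, fun ⟨_, hr⟩ ↦ ⟨y, hr.tail ⟨hxy, .inr rfl⟩⟩⟩
  have huU : u ∈ U := mem_filter.2 ⟨he.1, v, .refl⟩
  have hvV : v ∈ V := (hUV u v he).1 huU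
  have hu'U : u' ∉ U := fun hu' ↦ by
    obtain ⟨_, y, hr⟩ := mem_filter.1 hu'
    exact hnr (hr.tail ⟨he', .inl rfl⟩)
  have hv'V : v' ∉ V := mt (hUV u' v' he').2 hu'U
  have hVU : V.card < U.card :=
    card_lt_card_of_not_isExchangeEdge hb hD hV
      (fun x _ hxU y hyV hxy ↦ hxU ((hUV x y hxy).2 hyV)) huU he'.2.1 hv'V
      (h.isBase_insert_erase hb hD he.1 he'.2.1)
  have hVU' : ((D \ b) \ V).card < ((b \ D) \ U).card :=
    card_lt_card_of_not_isExchangeEdge hb hD sdiff_subset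
      (fun x hx hxU y hyV hxy ↦ (mem_sdiff.1 hyV).2 ((hUV x y hxy).1 (by simpa [hx] using hxU)))
      (mem_sdiff.2 ⟨he'.1, hu'U⟩) he.2.1 (by simp [hvV])
      (h.isBase_insert_erase hb hD he'.1 he.2.1)
  rw [card_sdiff_of_subset hU, card_sdiff_of_subset hV] at hVU'
  have := hb.card_sdiff_comm hD
  omega

def exchangePair (b D : Finset α) (x y : α) : Multiset (Finset α) :=
  insert y (b.erase x) ::ₘ insert x (D.erase y) ::ₘ 0

theorem exchangePair_comm : exchangePair b D x y = exchangePair D b y x :=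
  Multiset.cons_swap _ _ _

theorem symExchStep_exchangePair {A B : Finset α} {y' : α} (hx : x ∈ A \ B) (hy : y ∈ B \ A)
    (hy' : y' ∈ B \ A) (hyy' : y ≠ y') (h₁ : N.IsBase (insert y (A.erase x) : Finset α))
    (h₂ : N.IsBase (insert x (B.erase y) : Finset α))
    (h₁' : N.IsBase (insert y' (A.erase x) : Finset α))
    (h₂' : N.IsBase (insert x (B.erase y') : Finset α)) :
    SymExchStep N (exchangePair A B x y) (exchangePair A B x y') := by
  rw [Finset.mem_sdiff] at hx hy hy'
  have e₁ : insert y' ((insert y (A.erase x)).erase y) = insert y' (A.erase x) := by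
    rw [Finset.erase_insert fun h ↦ hy.2 (Finset.mem_of_mem_erase h)]
  have e₂ : insert y ((insert x (B.erase y)).erase y') = insert x (B.erase y') := by
    ext t; simp only [Finset.mem_insert, Finset.mem_erase]; grind
  refine ⟨0, _, _, y, y', by simp, h₁, h₂, ?_, ?_, by rwa [e₁], by rwa [e₂], rfl, by
    rw [exchangePair, e₁, e₂]⟩ <;>
    simp only [Finset.mem_sdiff, Finset.mem_insert, Finset.mem_erase] <;> grind

theorem IsExchangeEdge.insert_erase_ne (hxy : IsExchangeEdge M b D x y)
    (huv : IsExchangeEdge M b D u v) (hne : insert u (D.erase v) ≠ b) :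
    insert x (D.erase y) ≠ b := by
  rintro rfl
  obtain ⟨hu, hv, -⟩ := huv
  obtain ⟨hx, -, -⟩ := hxy
  simp only [Finset.mem_sdiff, Finset.mem_insert, Finset.mem_erase] at hu hv hx
  obtain rfl : u = x := by tauto
  obtain rfl : v = y := by tauto
  exact hne rfl

namespace IsBaseDeletion

theorem isBase_of_isExchangeEdge (h : IsBaseDeletion M Mb b) (hb : M.IsBase (b : Set α))
    (hD : M.IsBase (D : Set α)) (hxy : IsExchangeEdge M b D x y)
    (hne : insert x (D.erase y) ≠ b) :
    Mb.IsBase (insert y (b.erase x) : Finset α) ∧ Mb.IsBase (insert x (D.erase y) : Finset α) :=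
  ⟨h.isBase_of_mem_of_notMem (e := y) (h.isBase_insert_erase hb hD hxy.1 hxy.2.1)
    (by simp) (by simpa using (Finset.mem_sdiff.1 hxy.2.1).2),
    (h _).2 ⟨hxy.2.2, fun heq ↦ hne (Finset.coe_injective heq)⟩⟩

theorem symExchStep_of_exchangeMove (h : IsBaseDeletion M Mb b) (hb : M.IsBase (b : Set α))
    (hD : M.IsBase (D : Set α))
    (hne : ∀ x y, IsExchangeEdge M b D x y → insert x (D.erase y) ≠ b) {p q : α × α}
    (hp : IsExchangeEdge M b D p.1 p.2) (hpq : ExchangeMove M b D p q) :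
    Relation.ReflTransGen (SymExchStep Mb) (exchangePair b D p.1 p.2)
      (exchangePair b D q.1 q.2) := by
  obtain ⟨x, y⟩ := p
  obtain ⟨x', y'⟩ := q
  obtain ⟨hq, rfl | rfl⟩ := hpq
  all_goals
    obtain ⟨hp₁, hp₂⟩ := h.isBase_of_isExchangeEdge hb hD hp (hne _ _ hp)
    obtain ⟨hq₁, hq₂⟩ := h.isBase_of_isExchangeEdge hb hD hq (hne _ _ hq)
  · obtain rfl | hyy' := eq_or_ne y y'
    · rfl
    exact .single (symExchStep_exchangePair hp.1 hp.2.1 hq.2.1 hyy' hp₁ hp₂ hq₁ hq₂)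
  · obtain rfl | hxx' := eq_or_ne x x'
    · rfl
    rw [exchangePair_comm, exchangePair_comm (x := x')]
    exact .single (symExchStep_exchangePair hp.2.1 hp.1 hq.1 hxx' hp₂ hp₁ hq₂ hq₁)

theorem reflTransGen_exchangePair (h : IsBaseDeletion M Mb b) (hb : M.IsBase (b : Set α))
    (hD : M.IsBase (D : Set α))
    (hne : ∀ x y, IsExchangeEdge M b D x y → insert x (D.erase y) ≠ b)
    (huv : IsExchangeEdge M b D u v) {q : α × α}
    (hr : Relation.ReflTransGen (ExchangeMove M b D) (u, v) q) :
    Relation.ReflTransGen (SymExchStep Mb) (exchangePair b D u v) (exchangePair b D q.1 q.2) := by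
  induction hr with
  | refl => rfl
  | @tail p q hr hpq ih =>
    have hp : IsExchangeEdge M b D p.1 p.2 := by
      obtain rfl | ⟨_, -, hp⟩ := hr.cases_tail
      exacts [huv, hp.1]
    exact ih.trans (h.symExchStep_of_exchangeMove hb hD hne hp hpq)

end IsBaseDeletion

theorem exists_exchangePair_of_symExchStep {Y : Multiset (Finset α)}
    (h : SymExchStep M (b ::ₘ D ::ₘ 0) Y) :
    ∃ x y, IsExchangeEdge M b D x y ∧ Y = exchangePair b D x y := by
  obtain ⟨S₀, B₁, B₂, e, f, -, -, -, he, hf, hB₁', hB₂', hX, rfl⟩ := h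
  obtain rfl : S₀ = 0 := by simpa using congrArg Multiset.card hX
  have hb : b ∈ B₁ ::ₘ B₂ ::ₘ 0 := hX ▸ Multiset.mem_cons_self b _
  simp only [Multiset.mem_cons, Multiset.notMem_zero, or_false] at hb
  obtain rfl | rfl := hb
  · obtain rfl : D = B₂ := by simpa using hX
    exact ⟨e, f, ⟨he, hf, hB₂'⟩, rfl⟩
  · rw [Multiset.cons_swap B₁] at hX
    obtain rfl : D = B₁ := by simpa using hX
    exact ⟨f, e, ⟨hf, he, hB₁'⟩, Multiset.cons_swap _ _ _⟩

namespace IsBaseDeletion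

variable {P X Y T : Multiset (Finset α)}

theorem symExchStep (h : IsBaseDeletion M Mb b) (hXY : SymExchStep M X Y) (hX : b ∉ X)
    (hY : b ∉ Y) : SymExchStep Mb X Y := by
  have hMb : ∀ U : Multiset (Finset α), b ∉ U → ∀ B ∈ U, M.IsBase (B : Set α) →
      Mb.IsBase (B : Set α) :=
    fun U hU B hB hBM ↦ (h B).2 ⟨hBM, fun heq ↦ hU (Finset.coe_inj.1 heq ▸ hB)⟩
  exact hXY.of_isBase (fun B hB ↦ hMb X hX B hB (hXY.isBase_of_mem_left hB))
    fun B hB ↦ hMb Y hY B hB (hXY.symm.isBase_of_mem_left hB)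

/-- A symmetric exchange path of `M` can only pass through a pair containing `b` as
`{b - u + v, D - v + u} → {b, D} → {b - u' + v', D - v' + u'}`; rook moves from `(u, v)` to
`(u', v')` give a detour in `Mb`. -/
theorem reflTransGen_of_symExchStep_of_mem (h : IsBaseDeletion M Mb b)
    (hb : M.IsBase (b : Set α)) (hPX : SymExchStep M P X) (hXY : SymExchStep M X Y)
    (hbX : b ∈ X) (hX : Multiset.card X = 2) (hbP : b ∉ P) :
    Relation.ReflTransGen (SymExchStep Mb) P Y := by
  obtain ⟨D, rfl⟩ := Multiset.exists_eq_cons_cons_zero_of_mem hbX hX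
  have hD : M.IsBase (D : Set α) := hXY.isBase_of_mem_left (by simp)
  obtain ⟨u, v, huv, rfl⟩ := exists_exchangePair_of_symExchStep hPX.symm
  obtain ⟨u', v', hu'v', rfl⟩ := exists_exchangePair_of_symExchStep hXY
  have hne : ∀ x y, IsExchangeEdge M b D x y → insert x (D.erase y) ≠ b :=
    fun x y hxy ↦ hxy.insert_erase_ne huv fun heq ↦ hbP (by simp [exchangePair, heq])
  exact h.reflTransGen_exchangePair hb hD hne huv (h.reflTransGen_exchangeMove hb hD huv hu'v')

theorem reflTransGen_symExchStep_of_reflTransGen (h : IsBaseDeletion M Mb b)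
    (hb : M.IsBase (b : Set α)) (hXT : Relation.ReflTransGen (SymExchStep M) X T)
    (hX : Multiset.card X = 2) (hbT : b ∉ T) :
    (b ∉ X → Relation.ReflTransGen (SymExchStep Mb) X T) ∧
      (b ∈ X → ∀ P, b ∉ P → SymExchStep M P X → Relation.ReflTransGen (SymExchStep Mb) P T) := by
  induction hXT using Relation.ReflTransGen.head_induction_on with
  | refl => exact ⟨fun _ ↦ .refl, fun hbT' ↦ absurd hbT' hbT⟩
  | @head X C hXC hCT ih =>
    have hC : Multiset.card C = 2 := hXC.card_eq.trans hX
    obtain ⟨ih₁, ih₂⟩ := ih hC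
    refine ⟨fun hbX ↦ ?_, fun hbX P hbP hPX ↦ ?_⟩ <;> by_cases hbC : b ∈ C
    · exact ih₂ hbC X hbX hXC
    · exact .head (h.symExchStep hXC hbX hbC) (ih₁ hbC)
    · exact ih₂ hbC P hbP (eq_of_mem_of_sum_val_eq hbX hbC hX hC hXC.sum_eq ▸ hPX)
    · exact (h.reflTransGen_of_symExchStep_of_mem hb hPX hXC hbX hX hbP).trans (ih₁ hbC)

end IsBaseDeletion

theorem IsBaseDeletion.reflTransGen_of_quadMove {b : Set α} (h : IsBaseDeletion M Mb b)
    (hb : M.IsBase b) (hM : StrongWhite M) {U U' : Multiset (Finset α)}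
    (hUU' : QuadMove Mb U U') : Relation.ReflTransGen (SymExchStep Mb) U U' := by
  obtain ⟨S₀, B₁, B₂, B₁', B₂', hS₀, h₁, h₂, h₁', h₂', hsum, rfl, rfl⟩ := hUU'
  lift b to Finset α using ((h _).1 h₁).1.finite_of_finite B₁.finite_toSet hb
  have hMb : ∀ {B : Finset α}, Mb.IsBase (B : Set α) → M.IsBase (B : Set α) ∧ b ≠ B :=
    fun hB ↦ ⟨((h _).1 hB).1, fun heq ↦ ((h _).1 hB).2 (congrArg _ heq.symm)⟩
  have hpath : Relation.ReflTransGen (SymExchStep M) (B₁ ::ₘ B₂ ::ₘ 0) (B₁' ::ₘ B₂' ::ₘ 0) :=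
    hM _ _ (by simp [(hMb h₁).1, (hMb h₂).1]) (by simp [(hMb h₁').1, (hMb h₂').1])
      (by simpa using hsum)
  have hpath' := (h.reflTransGen_symExchStep_of_reflTransGen hb hpath (by simp)
    (by simp [(hMb h₁').2, (hMb h₂').2])).1 (by simp [(hMb h₁).2, (hMb h₂).2])
  simpa [Function.onFun, Multiset.cons_add] using
    Relation.ReflTransGen.lift (· + S₀) (fun _ _ hPQ ↦ hPQ.add_right hS₀) _ _ hpath'

end DecidableEq

theorem stmt5_general [DecidableEq α] (M Mb : Matroid α)
    (hM : StrongWhite M)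
    (b : Set α) (hb : M.IsBase b)
    (hMbB : ∀ B : Set α, Mb.IsBase B ↔ M.IsBase B ∧ B ≠ b)
    (hweak : WeakWhite Mb) :
    StrongWhite Mb := fun S T hS hT hsum ↦
  Relation.reflTransGen_closed (fun _ _ ↦ IsBaseDeletion.reflTransGen_of_quadMove hMbB hb hM) _ _
    (hweak S T hS hT hsum)

/-- If `M` satisfies the strong White condition, the bases of `Mb` are exactly
the bases of `M` other than `b`, and `Mb` satisfies the weak White condition,
then `Mb` satisfies the strong White condition. -/
theorem stmt5 [DecidableEq α] (M Mb : Matroid α) (hE : M.E.Finite)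
    (hM : StrongWhite M)
    (b : Set α) (hb : M.IsBase b)
    (hMbE : Mb.E = M.E)
    (hMbB : ∀ B : Set α, Mb.IsBase B ↔ M.IsBase B ∧ B ≠ b)
    (hweak : WeakWhite Mb) :
    StrongWhite Mb :=
  stmt5_general M Mb hM b hb hMbB hweak
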